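/- Let R be a complete discrete valuation ring with uniformizer π, such that n is a positive integer invertible in R and R contains a primitive n-th root of unity. Let a, b be positive integers with gcd(a, n) = gcd(b, n) = 1, and let r be an integer with gcd(r, n) = 1 and n dividing a + r·b. Let C = R[[z,w]]/(π − z^{a}·w^{b}) and let ψ : B = R[[s,t]]/(π^{n} − s^{a}·t^{b}) → C be the R-algebra homomorphism determined by s ↦ z^{n}, t ↦ w^{n}. If e₁, e₂ are nonnegative integers such that n divides e₁ + r·e₂, then the monomial z^{e₁}·w^{e₂} lies in the fraction field of the subring ψ(B) of C; that is, there exist β₁, β₂ ∈ B with ψ(β₂) ≠ 0 such that ψ(β₂)·z^{e₁}·w^{e₂} = ψ(β₁) in C. -/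

import Mathlib

/-- The ideal `(π^{m} − z^{a}·w^{b})` of `R[[z,w]] = MvPowerSeries (Fin 2) R`
(with `z = X 0`, `w = X 1`). -/
noncomputable abbrev stmt8.I (R : Type) [CommRing R] (π : R) (m a b : ℕ) :
    Ideal (MvPowerSeries (Fin 2) R) :=
  Ideal.span {(MvPowerSeries.C (σ := Fin 2) (R := R) π) ^ m
    - (MvPowerSeries.X (0 : Fin 2)) ^ a * (MvPowerSeries.X (1 : Fin 2)) ^ b}

/-- The quotient ring `R[[z,w]]/(π^{m} − z^{a}·w^{b})`. -/
abbrev stmt8.Q (R : Type) [CommRing R] (π : R) (m a b : ℕ) : Type :=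
  MvPowerSeries (Fin 2) R ⧸ stmt8.I R π m a b

/-!
Take `β₂ = π^n`. In `C` we have `π = z^a w^b`, so `π^n z^{e₁} w^{e₂} = z^{an+e₁} w^{bn+e₂}`.
Since `a` is invertible mod `n` and the congruences `ak ≡ e₁`, `bk ≡ e₂ (mod n)` are compatible
through `r`, they have a common solution `0 ≤ k < n`; then `an + e₁ = ak + ni` and
`bn + e₂ = bk + nj` with `i, j ≥ 0`, and the product equals `π^k (z^n)^i (w^n)^j = ψ(π^k s^i t^j)`.
Finally `ψ(π^n) = π^n ≠ 0` in `C`: comparing coefficients along the ray of `z^a w^b` shows that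
a constant in the ideal `(π − z^a w^b)` is divisible by every power of `π`.
-/

open MvPowerSeries

theorem dvd_and_single_div_eq_iff {n : ℕ} (hn : 0 < n) (d e : Fin 2 →₀ ℕ) :
    (n ∣ d 0 ∧ n ∣ d 1 ∧ Finsupp.single 0 (d 0 / n) + Finsupp.single 1 (d 1 / n) = e) ↔
      d = n • e := by
  constructor
  · rintro ⟨h0, h1, rfl⟩
    ext i
    fin_cases i <;> simp [Nat.mul_div_cancel' h0, Nat.mul_div_cancel' h1]
  · rintro rfl
    refine ⟨by simp, by simp, ?_⟩
    ext i
    fin_cases i <;> simp [hn]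

namespace MvPowerSeries

variable {σ R : Type*} [CommRing R]

theorem pow_succ_dvd_of_C_mem_span_C_sub_monomial {π c : R} {m : σ →₀ ℕ} (hm : m ≠ 0)
    (h : C c ∈ Ideal.span {C π - monomial m 1}) (k : ℕ) : π ^ (k + 1) ∣ c := by
  classical
  obtain ⟨f, hf⟩ := Ideal.mem_span_singleton.mp h
  have hcoeff : ∀ d, coeff d (C c) = π * coeff d f - coeff d (monomial m 1 * f) := fun d => by
    rw [hf, sub_mul, map_sub, coeff_C_mul]
  -- Comparing coefficients along the ray `ℕ • m` gives `c = π f_0` and `f_{k m} = π f_{(k+1) m}`.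
  suffices hray : c = π ^ (k + 1) * coeff (k • m) f from ⟨_, hray⟩
  induction k with
  | zero =>
    have h0 := hcoeff 0
    rw [coeff_C, if_pos rfl, coeff_monomial_mul, if_neg (by simpa [le_zero_iff] using hm),
      sub_zero] at h0
    rwa [zero_smul, zero_add, pow_one]
  | succ k ih =>
    have h1 := hcoeff ((k + 1) • m)
    rw [coeff_C, if_neg (by simp [hm]), succ_nsmul', coeff_add_monomial_mul, one_mul,
      eq_comm, sub_eq_zero] at h1
    rw [ih, ← h1, succ_nsmul']
    ring

theorem C_pow_notMem_span_C_sub_monomial [IsDomain R] {π : R} (hπ : Irreducible π)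
    {m : σ →₀ ℕ} (hm : m ≠ 0) (N : ℕ) : C π ^ N ∉ Ideal.span {C π - monomial m 1} := by
  rw [← map_pow]
  intro h
  have := (pow_dvd_pow_iff hπ.ne_zero hπ.not_isUnit).mp
    (pow_succ_dvd_of_C_mem_span_C_sub_monomial hm h N)
  omega

variable {n : ℕ}
  {Φ : MvPowerSeries (Fin 2) R →ₐ[R] MvPowerSeries (Fin 2) R}

theorem map_monomial_eq_monomial_nsmul (hn : 0 < n)
    (hΦ : ∀ (f : MvPowerSeries (Fin 2) R) (d : Fin 2 →₀ ℕ),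
      coeff d (Φ f) =
        if n ∣ d 0 ∧ n ∣ d 1 then coeff (Finsupp.single 0 (d 0 / n) + Finsupp.single 1 (d 1 / n)) f
        else 0)
    (e : Fin 2 →₀ ℕ) (c : R) : Φ (monomial e c) = monomial (n • e) c := by
  classical
  ext d
  rw [hΦ, coeff_monomial, coeff_monomial, ← ite_and]
  exact if_congr (by rw [and_assoc, dvd_and_single_div_eq_iff hn]) rfl rfl

theorem map_X_eq_X_pow (hn : 0 < n)
    (hΦ : ∀ (f : MvPowerSeries (Fin 2) R) (d : Fin 2 →₀ ℕ),
      coeff d (Φ f) =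
        if n ∣ d 0 ∧ n ∣ d 1 then coeff (Finsupp.single 0 (d 0 / n) + Finsupp.single 1 (d 1 / n)) f
        else 0)
    (i : Fin 2) : Φ (X i) = X i ^ n := by
  rw [X_pow_eq, X, map_monomial_eq_monomial_nsmul hn hΦ, Finsupp.smul_single_one]

end MvPowerSeries

theorem exists_lt_mul_eq_and_mul_eq {n a b e₁ e₂ : ℕ} [NeZero n] (han : a.Coprime n) {r : ℤ}
    (hab : (n : ℤ) ∣ a + r * b) (he : (n : ℤ) ∣ e₁ + r * e₂) :
    ∃ k < n, (a * k : ZMod n) = e₁ ∧ (b * k : ZMod n) = e₂ := by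
  have haU : IsUnit (a : ZMod n) := (ZMod.isUnit_iff_coprime a n).mpr han
  have hab' : (a : ZMod n) = -r * b := by
    have := (ZMod.intCast_zmod_eq_zero_iff_dvd _ n).mpr hab
    push_cast at this
    linear_combination this
  have he' : (e₁ : ZMod n) = -r * e₂ := by
    have := (ZMod.intCast_zmod_eq_zero_iff_dvd _ n).mpr he
    push_cast at this
    linear_combination this
  refine ⟨((a : ZMod n)⁻¹ * e₁).val, ZMod.val_lt _, ?_⟩
  rw [ZMod.natCast_zmod_val]
  have hak : (a : ZMod n) * ((a : ZMod n)⁻¹ * e₁) = e₁ := by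
    rw [← mul_assoc, ZMod.mul_inv_of_unit _ haU, one_mul]
  refine ⟨hak, haU.mul_left_cancel ?_⟩
  linear_combination (b : ZMod n) * hak + (b : ZMod n) * he' - (e₂ : ZMod n) * hab'

theorem exists_add_mul_eq_of_natCast_eq {n u v : ℕ} (huv : u ≤ v) (h : (u : ZMod n) = v) :
    ∃ i, u + n * i = v := by
  obtain ⟨i, hi⟩ := (Nat.modEq_iff_dvd' huv).mp ((ZMod.natCast_eq_natCast_iff _ _ _).mp h)
  exact ⟨i, by omega⟩

theorem exists_mul_add_mul_eq {n a b e₁ e₂ : ℕ} (hn : 0 < n) (han : a.Coprime n) {r : ℤ}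
    (hab : (n : ℤ) ∣ a + r * b) (he : (n : ℤ) ∣ e₁ + r * e₂) :
    ∃ k i j : ℕ, a * k + n * i = a * n + e₁ ∧ b * k + n * j = b * n + e₂ := by
  have : NeZero n := ⟨hn.ne'⟩
  obtain ⟨k, hk, hak, hbk⟩ := exists_lt_mul_eq_and_mul_eq han hab he
  have hmod : ∀ c e : ℕ, (c * k : ZMod n) = e → ∃ i, c * k + n * i = c * n + e := fun c e h =>
    exists_add_mul_eq_of_natCast_eq (Nat.le_add_right_of_le (Nat.mul_le_mul_left c hk.le))
      (by push_cast; rw [ZMod.natCast_self, mul_zero, zero_add, h])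
  obtain ⟨i, hi⟩ := hmod a e₁ hak
  obtain ⟨j, hj⟩ := hmod b e₂ hbk
  exact ⟨k, i, j, hi, hj⟩

theorem stmt_8_general
    (R : Type) [CommRing R] [IsDomain R]
    (π : R) (hπ : Irreducible π)
    (n : ℕ) (hn : 0 < n)
    (a b : ℕ) (ha : 0 < a)
    (han : Nat.gcd a n = 1)
    (r : ℤ) (hdvd : (n : ℤ) ∣ (a : ℤ) + r * (b : ℤ))
    (Φ : MvPowerSeries (Fin 2) R →ₐ[R] MvPowerSeries (Fin 2) R)
    (hΦ : ∀ (f : MvPowerSeries (Fin 2) R) (d : Fin 2 →₀ ℕ),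
      MvPowerSeries.coeff (R := R) d (Φ f) =
        if n ∣ d 0 ∧ n ∣ d 1 then
          MvPowerSeries.coeff (R := R)
            (Finsupp.single 0 (d 0 / n) + Finsupp.single 1 (d 1 / n)) f
        else 0)
    (ψ : stmt8.Q R π n a b →+* stmt8.Q R π 1 a b)
    (hψ : ∀ f : MvPowerSeries (Fin 2) R,
      ψ (Ideal.Quotient.mk (stmt8.I R π n a b) f)
        = Ideal.Quotient.mk (stmt8.I R π 1 a b) (Φ f))
    (e₁ e₂ : ℕ) (he : (n : ℤ) ∣ (e₁ : ℤ) + r * (e₂ : ℤ)) :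
    ∃ β₁ β₂ : stmt8.Q R π n a b, ψ β₂ ≠ 0 ∧
      ψ β₂ * (Ideal.Quotient.mk (stmt8.I R π 1 a b) (MvPowerSeries.X (0 : Fin 2))) ^ e₁
           * (Ideal.Quotient.mk (stmt8.I R π 1 a b) (MvPowerSeries.X (1 : Fin 2))) ^ e₂
        = ψ β₁ := by
  obtain ⟨k, i, j, hi, hj⟩ := exists_mul_add_mul_eq hn han hdvd he
  set mkB := Ideal.Quotient.mk (stmt8.I R π n a b)
  set mkC := Ideal.Quotient.mk (stmt8.I R π 1 a b)
  have hIC : stmt8.I R π 1 a b = Ideal.span {C π - monomial (.single 0 a + .single 1 b) 1} := by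
    rw [stmt8.I, pow_one, X_pow_eq, X_pow_eq, monomial_mul_monomial, one_mul]
  have hrel : mkC (C π) = mkC (X 0) ^ a * mkC (X 1) ^ b := by
    have h : mkC (C π ^ 1) = mkC (X 0 ^ a * X 1 ^ b) :=
      Ideal.Quotient.eq.mpr (Ideal.mem_span_singleton_self _)
    rwa [pow_one, map_mul, map_pow, map_pow] at h
  have hψC : ψ (mkB (C π)) = mkC (C π) := by rw [hψ, c_eq_algebraMap, Φ.commutes]
  have hψX (l : Fin 2) : ψ (mkB (X l)) = mkC (X l) ^ n := by
    rw [hψ, map_X_eq_X_pow hn hΦ, map_pow]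
  refine ⟨mkB (C π) ^ k * mkB (X 0) ^ i * mkB (X 1) ^ j, mkB (C π) ^ n, ?_, ?_⟩
  · rw [map_pow, hψC, ← map_pow, Ne, Ideal.Quotient.eq_zero_iff_mem, hIC]
    exact C_pow_notMem_span_C_sub_monomial hπ (by simp [ha.ne']) n
  · simp only [map_mul, map_pow, hψC, hψX, hrel]
    calc _ = mkC (X 0) ^ (a * n + e₁) * mkC (X 1) ^ (b * n + e₂) := by ring
      _ = mkC (X 0) ^ (a * k + n * i) * mkC (X 1) ^ (b * k + n * j) := by rw [hi, hj]
      _ = _ := by ring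

/-- Let `R` be a complete discrete valuation ring with uniformizer `π`,
such that `n` is a positive integer invertible in `R` and `R` contains a primitive
`n`-th root of unity.  Let `a, b` be positive integers with `gcd(a,n) = gcd(b,n) = 1`,
and let `r` be an integer with `gcd(r,n) = 1` and `n ∣ a + r·b`.  Let
`C = R[[z,w]]/(π − z^a·w^b)` and let `ψ : B = R[[s,t]]/(π^n − s^a·t^b) → C` be the
`R`-algebra homomorphism determined by `s ↦ z^n`, `t ↦ w^n` (encoded by the coefficient
characterization of the underlying substitution `Φ` and compatibility with the quotient
maps).  If `e₁, e₂` are nonnegative integers such that `n ∣ e₁ + r·e₂`, then the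
monomial `z^{e₁}·w^{e₂}` lies in the fraction field of the subring `ψ(B)` of `C`; that
is, there exist `β₁, β₂ ∈ B` with `ψ(β₂) ≠ 0` such that
`ψ(β₂)·z^{e₁}·w^{e₂} = ψ(β₁)` in `C`. -/
theorem stmt_8
    (R : Type) [CommRing R] [IsDomain R] [IsDiscreteValuationRing R]
    [IsAdicComplete (IsLocalRing.maximalIdeal R) R]
    (π : R) (hπ : Irreducible π)
    (n : ℕ) (hn : 0 < n) (hunit : IsUnit (n : R))
    (hroot : ∃ ζ : R, IsPrimitiveRoot ζ n)
    (a b : ℕ) (ha : 0 < a) (hb : 0 < b)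
    (han : Nat.gcd a n = 1) (hbn : Nat.gcd b n = 1)
    (r : ℤ) (hrn : Int.gcd r n = 1) (hdvd : (n : ℤ) ∣ (a : ℤ) + r * (b : ℤ))
    (Φ : MvPowerSeries (Fin 2) R →ₐ[R] MvPowerSeries (Fin 2) R)
    (hΦ : ∀ (f : MvPowerSeries (Fin 2) R) (d : Fin 2 →₀ ℕ),
      MvPowerSeries.coeff (R := R) d (Φ f) =
        if n ∣ d 0 ∧ n ∣ d 1 then
          MvPowerSeries.coeff (R := R)
            (Finsupp.single 0 (d 0 / n) + Finsupp.single 1 (d 1 / n)) f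
        else 0)
    (ψ : stmt8.Q R π n a b →+* stmt8.Q R π 1 a b)
    (hψ : ∀ f : MvPowerSeries (Fin 2) R,
      ψ (Ideal.Quotient.mk (stmt8.I R π n a b) f)
        = Ideal.Quotient.mk (stmt8.I R π 1 a b) (Φ f))
    (e₁ e₂ : ℕ) (he : (n : ℤ) ∣ (e₁ : ℤ) + r * (e₂ : ℤ)) :
    ∃ β₁ β₂ : stmt8.Q R π n a b, ψ β₂ ≠ 0 ∧
      ψ β₂ * (Ideal.Quotient.mk (stmt8.I R π 1 a b) (MvPowerSeries.X (0 : Fin 2))) ^ e₁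
           * (Ideal.Quotient.mk (stmt8.I R π 1 a b) (MvPowerSeries.X (1 : Fin 2))) ^ e₂
        = ψ β₁ :=
  stmt_8_general R π hπ n hn a b ha han r hdvd Φ hΦ ψ hψ e₁ e₂ he
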